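/- arXiv:1505.07578 — 3 statements merged into one kernel-verified Lean document; each statement's English description precedes it below -/
import Mathlib

section
/- Let Y be a minimal subshift over Fin k. Then the language L(Y) is enumeration reducible to its complement: L(Y) ≤ₑ L(Y)ᶜ (the set of words that appear in Y is enumeration reducible to the set of words that do not appear in Y). -/
/-- `A` is enumeration reducible to `B` via `f`. -/
def EnumRedVia (A B : Set ℕ) (f : ℕ × ℕ → Option (Finset ℕ)) : Prop :=
  Computable f ∧
    ∀ x : ℕ, x ∈ A ↔ ∃ n : ℕ, ∃ F : Finset ℕ, f (x, n) = some F ∧ ↑F ⊆ B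

/-- `A` is enumeration reducible to `B`. -/
def EnumRed (A B : Set ℕ) : Prop := ∃ f : ℕ × ℕ → Option (Finset ℕ), EnumRedVia A B f

/-- The subset of `ℕ` corresponding to a set of encodable elements. -/
def encSet {α : Type*} [Encodable α] (A : Set α) : Set ℕ :=
  Encodable.encode '' A

/-- The shift map on `ℤ → Fin k`. -/
def shiftMap (k : ℕ) (x : ℤ → Fin k) : ℤ → Fin k := fun i => x (i + 1)

/-- `Y` is a subshift: closed and shift-invariant. -/
def IsSubshift (k : ℕ) (Y : Set (ℤ → Fin k)) : Prop :=
  IsClosed Y ∧ shiftMap k '' Y = Y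

/-- The word `w` appears in the configuration `x`. -/
def AppearsInPoint (k : ℕ) (w : List (Fin k)) (x : ℤ → Fin k) : Prop :=
  ∃ i : ℤ, ∀ j : ℕ, ∀ hj : j < w.length, x (i + (j : ℤ)) = w.get ⟨j, hj⟩

/-- The language of `Y`: the set of words appearing in some point of `Y`. -/
def Lang (k : ℕ) (Y : Set (ℤ → Fin k)) : Set (List (Fin k)) :=
  {w : List (Fin k) | ∃ x ∈ Y, AppearsInPoint k w x}

/-- `Y` is a minimal subshift. -/
def IsMinimalSubshift (k : ℕ) (Y : Set (ℤ → Fin k)) : Prop :=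
  IsSubshift k Y ∧ Y.Nonempty ∧
    ∀ Z ⊆ Y, IsClosed Z → Z.Nonempty → shiftMap k '' Z = Z → Z = Y

/-!
In a minimal subshift every word of the language occurs in every point, and by compactness with
uniformly bounded gaps. Hence `w ∈ L(Y)` iff for some `N` every word of length `N` in `L(Y)`
contains `w` (the converse needs only `Y ≠ ∅`), i.e. iff for some `N` the finite, computable set
of length-`N` words avoiding `w` lies in `L(Y)ᶜ`. That is an enumeration reduction.
-/

open Encodable Denumerable

namespace Denumerable

theorem foldl_eq_append_raise' (l acc : List ℕ) (n : ℕ) :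
    (l.foldl (fun s m => (s.1 ++ [m + s.2], m + s.2 + 1)) (acc, n)).1 =
      acc ++ raise' l n := by
  induction l generalizing acc n with
  | nil => simp [raise']
  | cons m l ih => simp [raise', ih]

open Primrec in
theorem primrec_raise' : Primrec₂ raise' := by
  have hstep : Primrec₂ fun (_ : List ℕ × ℕ) (q : (List ℕ × ℕ) × ℕ) =>
      (q.1.1 ++ [q.2 + q.1.2], q.2 + q.1.2 + 1) :=
    (Primrec.pair (list_concat.comp (fst.comp fst) (nat_add.comp snd (snd.comp fst)))
      (succ.comp (nat_add.comp snd (snd.comp fst)))).comp snd |>.to₂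
  refine (fst.comp (list_foldl fst (Primrec.pair (const []) snd) hstep)).of_eq fun p => ?_
  simp [foldl_eq_append_raise']

-- `Primcodable (Finset ℕ)` is the `Denumerable` coding, which decodes through `raise'`.
theorem mem_ofNat_finset_iff (a c : ℕ) :
    a ∈ ofNat (Finset ℕ) c ↔ a ∈ raise' (ofNat (List ℕ) c) 0 := by
  show a ∈ Finset.map (eqv ℕ).symm.toEmbedding (raise'Finset (ofNat (List ℕ) c) 0) ↔ _
  simp only [eqv, Equiv.symm_mk, raise'Finset, Finset.mem_map_equiv, Equiv.coe_fn_mk, encode_nat]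
  rfl

end Denumerable

open Primrec in
theorem PrimrecRel.mem_ofNat_finset : PrimrecRel fun a c : ℕ => a ∈ ofNat (Finset ℕ) c :=
  ((PrimrecRel.exists_mem_list Primrec.eq).comp
    (primrec_raise'.comp ((Primrec.ofNat (List ℕ)).comp snd) (const 0)) fst).of_eq fun p => by
    simp [mem_ofNat_finset_iff]

theorem List.isInfix_iff_exists_isPrefix_drop {α : Type*} {w u : List α} :
    w <:+: u ↔ ∃ i ≤ u.length, w <+: u.drop i := by
  constructor
  · rintro ⟨s, t, rfl⟩
    exact ⟨s.length, by simp, by simp⟩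
  · rintro ⟨i, -, hi⟩
    exact hi.isInfix.trans (List.drop_suffix i u).isInfix

open Primrec in
theorem PrimrecRel.isInfix {α : Type*} [Primcodable α] [DecidableEq α] :
    PrimrecRel fun w u : List α => w <:+: u := by
  have hprefix : PrimrecRel fun (i : ℕ) (p : List α × List α) =>
      (p.2.drop i).take p.1.length = p.1 :=
    Primrec.eq.comp
      (list_take.comp (list_length.comp (fst.comp snd)) (list_drop.comp fst (snd.comp snd)))
      (fst.comp snd)
  refine (hprefix.exists_mem_list.comp (list_range.comp (succ.comp (list_length.comp snd)))
    Primrec.id).of_eq fun p => ?_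
  simp [List.isInfix_iff_exists_isPrefix_drop, List.prefix_iff_eq_take, eq_comm]

def wordsOfLength (k : ℕ) : ℕ → List (List (Fin k))
  | 0 => [[]]
  | n + 1 => (wordsOfLength k n).flatMap fun u => (List.finRange k).map (· :: u)

theorem mem_wordsOfLength {k n : ℕ} {u : List (Fin k)} :
    u ∈ wordsOfLength k n ↔ u.length = n := by
  induction n generalizing u with
  | zero => simp [wordsOfLength]
  | succ n ih => cases u <;> simp [wordsOfLength, ih]

open Primrec in
theorem primrec_wordsOfLength (k : ℕ) : Primrec (wordsOfLength k) :=
  (nat_rec₁ [[]] (list_flatMap snd (list_map (const (List.finRange k))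
    (list_cons.comp snd (snd.comp fst)).to₂).to₂).to₂).of_eq fun n => by
    induction n <;> simp [wordsOfLength, *]

section WitnessReduction

variable {α β : Type*} [Primcodable α] [Primcodable β]

/- The index `n` codes a pair `(m, c)`: the `c`-th finite set is output for `a` exactly when it
contains the codes of all of `g a m`. Guessing `c` avoids having to compute a code of a finite set
from a list. -/
def witnessReduction (g : α → ℕ → List β) (p : ℕ × ℕ) : Option (Finset ℕ) :=
  (decode₂ α p.1).bind fun a =>
    if ∀ b ∈ g a p.2.unpair.1, encode b ∈ ofNat (Finset ℕ) p.2.unpair.2 then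
      some (ofNat (Finset ℕ) p.2.unpair.2)
    else none

open Primrec in
theorem computable_witnessReduction {g : α → ℕ → List β} (hg : Primrec₂ g) :
    Computable (witnessReduction g) := by
  have hunpair : Primrec fun q : (ℕ × ℕ) × α => q.1.2.unpair :=
    Primrec.unpair.comp (snd.comp fst)
  have hmem : PrimrecRel fun (b : β) (c : ℕ) => encode b ∈ ofNat (Finset ℕ) c :=
    PrimrecRel.mem_ofNat_finset.comp (Primrec.encode.comp fst) snd
  have hcheck : PrimrecPred fun q : (ℕ × ℕ) × α =>
      ∀ b ∈ g q.2 q.1.2.unpair.1, encode b ∈ ofNat (Finset ℕ) q.1.2.unpair.2 :=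
    (PrimrecRel.forall_mem_list hmem).comp (hg.comp snd (fst.comp hunpair)) (snd.comp hunpair)
  exact (option_bind (Primrec.decode₂.comp fst)
    (Primrec.ite hcheck (option_some.comp ((Primrec.ofNat _).comp (snd.comp hunpair)))
      (const none)).to₂).to_comp

theorem enumRedVia_witnessReduction {A : Set α} {B : Set β} {g : α → ℕ → List β}
    (hg : Primrec₂ g) (hA : ∀ a, a ∈ A ↔ ∃ n, ∀ b ∈ g a n, b ∈ B) :
    EnumRedVia (encSet A) (encSet B) (witnessReduction g) := by
  refine ⟨computable_witnessReduction hg, fun x => ⟨?_, ?_⟩⟩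
  · rintro ⟨a, ha, rfl⟩
    obtain ⟨n, hn⟩ := (hA a).1 ha
    obtain ⟨c, hc⟩ : ∃ c, ofNat (Finset ℕ) c = ((g a n).map encode).toFinset :=
      ⟨_, ofNat_encode _⟩
    refine ⟨Nat.pair n c, ((g a n).map encode).toFinset, by simp [witnessReduction, hc], ?_⟩
    rintro _ h
    obtain ⟨b, hb, rfl⟩ := by simpa using h
    exact ⟨b, hn b hb, rfl⟩
  · rintro ⟨n, F, hF, hFB⟩
    simp only [witnessReduction, Option.bind_eq_some_iff, Option.ite_none_right_eq_some,
      Option.some.injEq] at hF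
    obtain ⟨a, ha, hcheck, rfl⟩ := hF
    refine ⟨a, (hA a).2 ⟨n.unpair.1, fun b hb => ?_⟩, mem_decode₂.1 ha⟩
    obtain ⟨b', hb', hb'b⟩ := hFB (hcheck b hb)
    exact encode_injective hb'b ▸ hb'

end WitnessReduction
section Subshift

variable {k : ℕ}

def window (x : ℤ → Fin k) (i : ℤ) (n : ℕ) : List (Fin k) :=
  List.ofFn fun j : Fin n => x (i + j)

@[simp]
theorem length_window (x : ℤ → Fin k) (i : ℤ) (n : ℕ) : (window x i n).length = n := by
  simp [window]

theorem window_add (x : ℤ → Fin k) (i : ℤ) (a b : ℕ) :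
    window x i (a + b) = window x i a ++ window x (i + a) b := by
  simp only [window, List.ofFn_add]
  congr 1
  simp [add_assoc]

theorem window_isInfix (x : ℤ → Fin k) (i : ℤ) (a n b : ℕ) :
    window x (i + a) n <:+: window x i (a + n + b) := by
  rw [window_add, window_add]
  exact ⟨_, _, rfl⟩

theorem window_shift (x : ℤ → Fin k) (t i : ℤ) (n : ℕ) :
    window (fun c => x (c + t)) i n = window x (i + t) n := by
  simp only [window]
  congr 1
  funext j
  congr 1
  ring

theorem appearsInPoint_iff {w : List (Fin k)} {x : ℤ → Fin k} :
    AppearsInPoint k w x ↔ ∃ i, window x i w.length = w := by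
  simp [AppearsInPoint, window, List.ext_get_iff]

theorem mem_lang_iff {Y : Set (ℤ → Fin k)} {w : List (Fin k)} :
    w ∈ Lang k Y ↔ ∃ x ∈ Y, ∃ i, window x i w.length = w := by
  simp [Lang, appearsInPoint_iff]

variable {Y : Set (ℤ → Fin k)}

theorem window_mem_lang {x : ℤ → Fin k} (hx : x ∈ Y) (i : ℤ) (n : ℕ) :
    window x i n ∈ Lang k Y :=
  mem_lang_iff.2 ⟨x, hx, i, by simp⟩

theorem mem_lang_of_isInfix {u w : List (Fin k)} (hu : u ∈ Lang k Y) (hwu : w <:+: u) :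
    w ∈ Lang k Y := by
  obtain ⟨x, hx, i, hxu⟩ := mem_lang_iff.1 hu
  obtain ⟨s, t, rfl⟩ := hwu
  have hsplit : window x i s.length ++ window x (i + s.length) w.length ++
      window x (i + s.length + w.length) t.length = s ++ w ++ t := by
    rw [← window_add, add_assoc i, ← Nat.cast_add, ← window_add, ← hxu]
    simp [add_assoc]
  obtain ⟨hsw, -⟩ := List.append_inj hsplit (by simp)
  exact mem_lang_iff.2 ⟨x, hx, i + s.length, (List.append_inj hsw (by simp)).2⟩

theorem IsSubshift.shift_mem (hY : IsSubshift k Y) {x : ℤ → Fin k} (hx : x ∈ Y) (t : ℤ) :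
    (fun c => x (c + t)) ∈ Y := by
  induction t using Int.induction_on with
  | zero => simpa using hx
  | succ n ih =>
    rw [← hY.2]
    exact ⟨_, ih, funext fun c => congrArg x (by ring)⟩
  | pred n ih =>
    rw [← hY.2] at ih
    obtain ⟨z, hz, hzx⟩ := ih
    convert hz using 1
    funext c
    have hc := congrFun hzx (c - 1)
    simp only [shiftMap, sub_add_cancel] at hc
    rw [hc]
    exact congrArg x (by ring)

theorem isOpen_setOf_window_eq (i : ℤ) (w : List (Fin k)) :
    IsOpen {x : ℤ → Fin k | window x i w.length = w} :=
  show IsOpen ((fun (x : ℤ → Fin k) (j : Fin w.length) => x (i + j)) ⁻¹'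
      {v | List.ofFn v = w}) from
    (isOpen_discrete _).preimage (continuous_pi fun j : Fin w.length => continuous_apply (i + j))

theorem isOpen_setOf_appearsInPoint (w : List (Fin k)) :
    IsOpen {x : ℤ → Fin k | AppearsInPoint k w x} := by
  simp only [appearsInPoint_iff, Set.ofPred_exists]
  exact isOpen_iUnion fun i => isOpen_setOf_window_eq i w

theorem appearsInPoint_shiftMap_iff {w : List (Fin k)} {x : ℤ → Fin k} :
    AppearsInPoint k w (shiftMap k x) ↔ AppearsInPoint k w x := by
  change AppearsInPoint k w (fun c => x (c + 1)) ↔ _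
  simp only [appearsInPoint_iff, window_shift]
  exact ⟨fun ⟨i, h⟩ => ⟨i + 1, h⟩, fun ⟨i, h⟩ => ⟨i - 1, by simpa using h⟩⟩

theorem IsMinimalSubshift.subset_of_preimage_eq (hY : IsMinimalSubshift k Y)
    {S : Set (ℤ → Fin k)} (hS : IsClosed S) (hσ : shiftMap k ⁻¹' S = S)
    (hne : (Y ∩ S).Nonempty) : Y ⊆ S := by
  have hinv : shiftMap k '' (Y ∩ S) = Y ∩ S := by
    conv_lhs => rw [← hσ]
    rw [Set.image_inter_preimage, hY.1.2]
  rw [← hY.2.2 (Y ∩ S) Set.inter_subset_left (hY.1.1.inter hS) hne hinv]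
  exact Set.inter_subset_right

theorem IsMinimalSubshift.appearsInPoint_of_mem_lang (hY : IsMinimalSubshift k Y)
    {w : List (Fin k)} (hw : w ∈ Lang k Y) {x : ℤ → Fin k} (hx : x ∈ Y) :
    AppearsInPoint k w x := by
  obtain ⟨x₀, hx₀, hwx₀⟩ := hw
  by_contra hwx
  have hsub := hY.subset_of_preimage_eq (isOpen_setOf_appearsInPoint w).isClosed_compl
    (by ext; simp [appearsInPoint_shiftMap_iff]) ⟨x, hx, hwx⟩
  exact hsub hx₀ hwx₀

theorem IsMinimalSubshift.exists_forall_isInfix (hY : IsMinimalSubshift k Y)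
    {w : List (Fin k)} (hw : w ∈ Lang k Y) :
    ∃ N, ∀ u ∈ Lang k Y, u.length = N → w <:+: u := by
  have hcover : Y ⊆ ⋃ j : ℤ, {x | window x j w.length = w} := fun x hx => by
    simpa [appearsInPoint_iff] using hY.appearsInPoint_of_mem_lang hw hx
  obtain ⟨t, ht⟩ := hY.1.1.isCompact.elim_finite_subcover _
    (fun j => isOpen_setOf_window_eq j w) hcover
  set m := t.sup Int.natAbs
  refine ⟨2 * m + w.length, fun u hu hlen => ?_⟩
  obtain ⟨x, hx, i, hxu⟩ := mem_lang_iff.1 hu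
  rw [← hxu, hlen]
  obtain ⟨j, hjt, hj⟩ := Set.mem_iUnion₂.1 (ht (hY.1.shift_mem hx (i + m)))
  have hjm : j.natAbs ≤ m := Finset.le_sup hjt
  rw [Set.mem_ofPred_eq, window_shift] at hj
  -- `w` sits at offset `m + j ∈ [0, 2m]` of the window
  obtain ⟨a, ha⟩ : ∃ a : ℕ, (a : ℤ) = m + j := ⟨(m + j).toNat, by omega⟩
  have hwa : window x (i + a) w.length = w :=
    (congrArg (window x · w.length) (by rw [ha]; ring)).trans hj
  have := window_isInfix x i a w.length (2 * m - a)
  rwa [hwa, show a + w.length + (2 * m - a) = 2 * m + w.length by omega] at this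

theorem mem_lang_of_forall_isInfix (hne : Y.Nonempty) {w : List (Fin k)} {N : ℕ}
    (h : ∀ u ∈ Lang k Y, u.length = N → w <:+: u) : w ∈ Lang k Y := by
  obtain ⟨x, hx⟩ := hne
  exact mem_lang_of_isInfix (window_mem_lang hx 0 N) (h _ (window_mem_lang hx 0 N) (by simp))

theorem IsMinimalSubshift.mem_lang_iff_exists_forall_isInfix (hY : IsMinimalSubshift k Y)
    {w : List (Fin k)} : w ∈ Lang k Y ↔ ∃ N, ∀ u ∈ Lang k Y, u.length = N → w <:+: u :=
  ⟨hY.exists_forall_isInfix, fun ⟨_, h⟩ => mem_lang_of_forall_isInfix hY.2.1 h⟩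

end Subshift

theorem lang_enumRed_compl_of_minimal_general (k : ℕ)
    (Y : Set (ℤ → Fin k)) (hY : IsMinimalSubshift k Y) :
    EnumRed (encSet (Lang k Y)) (encSet (Lang k Y)ᶜ) := by
  have hfree : PrimrecRel fun u w : List (Fin k) => ¬ w <:+: u := PrimrecRel.isInfix.swap.not
  have hg : Primrec₂ fun w N => (wordsOfLength k N).filter fun u => ¬ w <:+: u :=
    (hfree.listFilter.comp ((primrec_wordsOfLength k).comp Primrec.snd) Primrec.fst).to₂
  refine ⟨_, enumRedVia_witnessReduction hg fun w => ?_⟩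
  rw [hY.mem_lang_iff_exists_forall_isInfix]
  simp only [List.mem_filter, mem_wordsOfLength, decide_eq_true_eq, Set.mem_compl_iff]
  exact exists_congr fun N => forall_congr' fun u => by tauto

/-- The language of a minimal subshift is enumeration reducible to its
complement (the set of forbidden words). -/
theorem lang_enumRed_compl_of_minimal (k : ℕ) (hk : 1 ≤ k)
    (Y : Set (ℤ → Fin k)) (hY : IsMinimalSubshift k Y) :
    EnumRed (encSet (Lang k Y)) (encSet (Lang k Y)ᶜ) :=
  lang_enumRed_compl_of_minimal_general k Y hY
end

section
/- Let Y be a minimal subshift over Fin k which is of finite type, i.e., there exists a finite set F of words w : List (Fin k) such that Y = { x : ℤ → Fin k | no w ∈ F appears in x }. Then the language L(Y) is computable (ComputablePred for membership in L(Y), via the encoding of List (Fin k) into ℕ). -/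
/-!
By pigeonhole, some window of length `N` (a bound on the lengths of the forbidden words) occurs
twice in a point `x ∈ Y`, at positions `i < i + p`. The `p`-periodic point repeating `x` on
`[i, i + p)` then has only length-`N` windows that are windows of `x`, so it contains no forbidden
word and lies in `Y`. By minimality `Y` is the finite orbit of this periodic point, so `L(Y)` is the
set of factors of a periodic sequence, decidable by trying the `p` possible starting phases.
-/

open Function

theorem Primrec.of_periodic {σ : Type*} [Primcodable σ] {f : ℕ → σ} {p : ℕ}
    (hf : Periodic f p) (hp : 0 < p) : Primrec f :=
  ((Primrec.list_getD (f 0)).comp (Primrec.const ((List.range p).map f))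
    (Primrec.nat_mod.comp Primrec.id (Primrec.const p))).of_eq fun n => by
    rw [List.getD_eq_getElem _ _ (by simpa using Nat.mod_lt n hp), List.getElem_map,
      List.getElem_range, hf.map_mod_nat, id]

theorem primrecPred_exists_window_lt {α : Type*} [Primcodable α] [DecidableEq α] {f : ℕ → α}
    (hf : Primrec f) (p : ℕ) :
    PrimrecPred fun w : List α => ∃ m < p, ∀ t < w.length, w[t]? = some (f (m + t)) := by
  have hletter : PrimrecRel fun (t : ℕ) (mw : ℕ × List α) => mw.2[t]? = some (f (mw.1 + t)) :=
    Primrec.eq.comp (Primrec.list_getElem?.comp (Primrec.snd.comp Primrec.snd) Primrec.fst)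
      (Primrec.option_some.comp (hf.comp (Primrec.nat_add.comp (Primrec.fst.comp Primrec.snd)
        Primrec.fst)))
  have hfactor : PrimrecRel fun (m : ℕ) (w : List α) => ∀ t < w.length, w[t]? = some (f (m + t)) :=
    (hletter.forall_mem_list.comp (Primrec.list_range.comp (Primrec.list_length.comp Primrec.snd))
      (Primrec.id : Primrec fun mw : ℕ × List α => mw)).of_eq fun mw => by simp
  exact (hfactor.exists_mem_list.comp (Primrec.const (List.range p)) Primrec.id).of_eq
    fun w => by simp

theorem appearsInPoint_iff_getElem? {k : ℕ} {w : List (Fin k)} {x : ℤ → Fin k} :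
    AppearsInPoint k w x ↔ ∃ i : ℤ, ∀ t < w.length, w[t]? = some (x (i + t)) := by
  simp only [AppearsInPoint, List.get_eq_getElem, List.getElem?_eq_some_iff]
  exact exists_congr fun i => ⟨fun h t ht => ⟨ht, (h t ht).symm⟩, fun h t ht => (h t ht).2.symm⟩

theorem appearsInPoint_comp_add_iff {k : ℕ} {w : List (Fin k)} {x : ℤ → Fin k} (c : ℤ) :
    AppearsInPoint k w (fun i => x (i + c)) ↔ AppearsInPoint k w x := by
  simp only [appearsInPoint_iff_getElem?]
  refine ⟨fun ⟨i, h⟩ => ⟨i + c, fun t ht => ?_⟩, fun ⟨i, h⟩ => ⟨i - c, fun t ht => ?_⟩⟩ <;>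
    rw [h t ht] <;> ring_nf

theorem iterate_shiftMap (k n : ℕ) (x : ℤ → Fin k) : (shiftMap k)^[n] x = fun i => x (i + n) := by
  induction n with
  | zero => simp
  | succ n ih =>
    rw [iterate_succ_apply', ih]
    funext i
    simp only [shiftMap]
    push_cast
    ring_nf

theorem appearsInPoint_iterate_shiftMap_iff {k : ℕ} {w : List (Fin k)} {x : ℤ → Fin k} (n : ℕ) :
    AppearsInPoint k w ((shiftMap k)^[n] x) ↔ AppearsInPoint k w x := by
  rw [iterate_shiftMap]
  exact appearsInPoint_comp_add_iff n

theorem appearsInPoint_iff_of_periodic {k : ℕ} {w : List (Fin k)} {y : ℤ → Fin k} {p : ℕ}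
    (hper : Periodic y p) (hp : 0 < p) :
    AppearsInPoint k w y ↔ ∃ m < p, ∀ t < w.length, w[t]? = some (y (m + t : ℕ)) := by
  rw [appearsInPoint_iff_getElem?]
  have hp' : (0 : ℤ) < p := by exact_mod_cast hp
  refine ⟨fun ⟨i, h⟩ => ⟨(i % p).toNat, ?_, fun t ht => ?_⟩,
    fun ⟨m, _, h⟩ => ⟨m, fun t ht => by exact_mod_cast h t ht⟩⟩
  · have := Int.emod_lt_of_pos i hp'
    omega
  · have hshift : i + t = ((i % p).toNat + t : ℕ) + (i / p) * p := by
      have := Int.ediv_mul_add_emod i p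
      have := Int.emod_nonneg i hp'.ne'
      push_cast
      omega
    rw [h t ht, hshift]
    simpa using congrArg some (hper.int_mul (i / p) _)

theorem IsMinimalSubshift.eq_range_iterate {k : ℕ} {Y : Set (ℤ → Fin k)}
    (hY : IsMinimalSubshift k Y) {y : ℤ → Fin k} (hy : y ∈ Y) {p : ℕ} (hp : 0 < p)
    (hper : IsPeriodicPt (shiftMap k) p y) : Y = Set.range fun n => (shiftMap k)^[n] y := by
  obtain ⟨⟨-, hinv⟩, -, hmin⟩ := hY
  have hmaps : Set.MapsTo (shiftMap k) Y Y := fun x hx => hinv ▸ Set.mem_image_of_mem _ hx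
  symm
  refine hmin _ ?_ ?_ ⟨y, 0, rfl⟩ ?_
  · rintro _ ⟨n, rfl⟩
    exact hmaps.iterate n hy
  · refine Set.Finite.isClosed (((Set.finite_Iio p).image fun n => (shiftMap k)^[n] y).subset ?_)
    rintro _ ⟨n, rfl⟩
    exact ⟨n % p, Nat.mod_lt n hp, hper.iterate_mod_apply n⟩
  · rw [← Set.range_comp]
    refine subset_antisymm ?_ ?_ <;> rintro _ ⟨n, rfl⟩
    · exact ⟨n + 1, iterate_succ_apply' _ _ _⟩
    · refine ⟨n + p - 1, ?_⟩
      rw [comp_apply, ← iterate_succ_apply' (shiftMap k), Nat.succ_eq_add_one,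
        show n + p - 1 + 1 = n + p by omega, iterate_add_apply, hper.eq]

theorem IsMinimalSubshift.lang_eq {k : ℕ} {Y : Set (ℤ → Fin k)}
    (hY : IsMinimalSubshift k Y) {y : ℤ → Fin k} (hy : y ∈ Y) {p : ℕ} (hp : 0 < p)
    (hper : IsPeriodicPt (shiftMap k) p y) : Lang k Y = {w | AppearsInPoint k w y} := by
  rw [hY.eq_range_iterate hy hp hper]
  ext w
  simp only [Lang, Set.mem_range, exists_exists_eq_and, appearsInPoint_iterate_shiftMap_iff,
    Set.mem_ofPred_eq]
  exact ⟨fun ⟨_, h⟩ => h, fun h => ⟨0, h⟩⟩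

theorem appearsInPoint_of_forall_window {k : ℕ} {x y : ℤ → Fin k} {N : ℕ}
    (hwin : ∀ m : ℤ, ∃ j : ℤ, ∀ t < N, y (m + t) = x (j + t)) {w : List (Fin k)}
    (hw : w.length ≤ N) (hwy : AppearsInPoint k w y) : AppearsInPoint k w x := by
  obtain ⟨i, hi⟩ := hwy
  obtain ⟨j, hj⟩ := hwin i
  exact ⟨j, fun t ht => (hj t (ht.trans_le hw)).symm.trans (hi t ht)⟩

theorem exists_periodic_of_window_repeat {α : Type*} {x : ℤ → α} {i : ℤ} {p N : ℕ} (hp : 0 < p)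
    (hrep : ∀ t < N, x (i + p + t) = x (i + t)) :
    ∃ y : ℤ → α, Periodic y p ∧ ∀ m : ℤ, ∃ j : ℤ, ∀ t < N, y (m + t) = x (j + t) := by
  -- `x` itself is `p`-periodic on `[i, i + p + N)`, by induction along the repetition.
  have hmod : ∀ s : ℕ, s < p + N → x (i + (s % p : ℕ)) = x (i + s) := by
    intro s
    induction s using Nat.strong_induction_on with
    | _ s ih =>
      intro hs
      rcases lt_or_ge s p with hsp | hsp
      · rw [Nat.mod_eq_of_lt hsp]
      · obtain ⟨t, rfl⟩ := Nat.exists_eq_add_of_le hsp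
        rw [Nat.add_mod_left, ih t (by omega) (by omega), ← hrep t (by omega)]
        push_cast
        ring_nf
  have hp' : (0 : ℤ) < p := by exact_mod_cast hp
  refine ⟨fun m => x (i + m % p), fun m => by simp, fun m => ⟨i + m % p, fun t ht => ?_⟩⟩
  obtain ⟨r, hr⟩ : ∃ r : ℕ, (r : ℤ) = m % p := ⟨(m % p).toNat, by simp [Int.emod_nonneg m hp'.ne']⟩
  have : (m + t) % p = ((r + t) % p : ℕ) := by
    push_cast
    rw [hr, Int.emod_add_emod]
  simp only [this, ← hr, hmod (r + t) (by have := Int.emod_lt_of_pos m hp'; omega)]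
  push_cast
  ring_nf

theorem exists_periodic_of_forall_not_appearsInPoint {k : ℕ} {F : Set (List (Fin k))}
    (hF : F.Finite) {x : ℤ → Fin k} (hx : ∀ w ∈ F, ¬ AppearsInPoint k w x) :
    ∃ y : ℤ → Fin k, ∃ p : ℕ, 0 < p ∧ Periodic y p ∧ ∀ w ∈ F, ¬ AppearsInPoint k w y := by
  obtain ⟨N, hN⟩ := (hF.image List.length).bddAbove
  obtain ⟨a, b, hab, hwin⟩ := Set.finite_univ.exists_lt_map_eq_of_forall_mem
    (f := fun a : ℕ => fun t : Fin N => x (a + t)) fun _ => Set.mem_univ _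
  obtain ⟨y, hper, hy⟩ := exists_periodic_of_window_repeat (x := x) (i := a) (N := N)
    (Nat.sub_pos_of_lt hab) fun t ht => by
      have := congrFun hwin ⟨t, ht⟩
      simp only at this
      rw [this]
      push_cast [hab.le]
      ring_nf
  exact ⟨y, b - a, Nat.sub_pos_of_lt hab, hper, fun w hw hwy =>
    hx w hw (appearsInPoint_of_forall_window hy (hN (Set.mem_image_of_mem _ hw)) hwy)⟩

theorem lang_computable_of_minimal_SFT_general (k : ℕ)
    (Y : Set (ℤ → Fin k)) (hY : IsMinimalSubshift k Y)
    (F : Set (List (Fin k))) (hF : F.Finite)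
    (hSFT : Y = {x : ℤ → Fin k | ∀ w ∈ F, ¬ AppearsInPoint k w x}) :
    ComputablePred (· ∈ Lang k Y) := by
  obtain ⟨x, hx⟩ := hY.2.1
  rw [hSFT] at hx
  obtain ⟨y, p, hp, hper, hyF⟩ := exists_periodic_of_forall_not_appearsInPoint hF hx
  have hyY : y ∈ Y := hSFT ▸ hyF
  have hshift : IsPeriodicPt (shiftMap k) p y := by
    simpa [IsPeriodicPt, IsFixedPt, iterate_shiftMap] using hper.funext
  rw [hY.lang_eq hyY hp hshift]
  have hletters : Primrec fun n : ℕ => y n :=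
    Primrec.of_periodic (fun n => by simpa using hper n) hp
  exact (primrecPred_exists_window_lt hletters p).computablePred.of_eq fun w =>
    (appearsInPoint_iff_of_periodic hper hp).symm

/-- A minimal subshift of finite type has a computable language. -/
theorem lang_computable_of_minimal_SFT (k : ℕ) (hk : 1 ≤ k)
    (Y : Set (ℤ → Fin k)) (hY : IsMinimalSubshift k Y)
    (F : Set (List (Fin k))) (hF : F.Finite)
    (hSFT : Y = {x : ℤ → Fin k | ∀ w ∈ F, ¬ AppearsInPoint k w x}) :
    ComputablePred (· ∈ Lang k Y) :=
  lang_computable_of_minimal_SFT_general k Y hY F hF hSFT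
end

section
/- Let S be a recursively enumerable set of nonempty lists of natural numbers. Then the set of all Horn implications that are consequences of S is recursively enumerable: the set { (a, F) : ℕ × Finset ℕ | a ∈ C(↑F) } (equivalently, the set of pairs (a, F) such that every X ∈ V(S) with ↑F ⊆ X satisfies a ∈ X) is recursively enumerable (REPred via Mathlib's encoding of ℕ × Finset ℕ). -/
/-!
A number lies in the closure `C(F)` exactly when it has a finite Horn derivation from `F`. By the
normal form of r.e. predicates, `l ∈ S ↔ ∃ k, q l k` for a primitive recursive `q`, so a
derivation can be written down as a finite list of steps in which every rule application carries
its witness `k`. Checking such a list is primitive recursive, so `a ∈ C(F)` is the projection of a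
primitive recursive relation, which makes it r.e.
-/

/-- A set `X ⊆ ℕ` satisfies the Horn implications encoded by `S`:
a list `n₀ :: t ∈ S` means `(∀ m ∈ t, m ∈ X) → n₀ ∈ X`. -/
def SatisfiesHorn (S : Set (List ℕ)) (X : Set ℕ) : Prop :=
  ∀ n₀ : ℕ, ∀ t : List ℕ, (n₀ :: t) ∈ S → (∀ m ∈ t, m ∈ X) → n₀ ∈ X

/-- The quasivariety defined by `S`. -/
def QV (S : Set (List ℕ)) : Set (Set ℕ) := {X | SatisfiesHorn S X}

/-- The closure of `Y`: the smallest element of `QV S` containing `Y`. -/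
def QVclosure (S : Set (List ℕ)) (Y : Set ℕ) : Set ℕ :=
  ⋂₀ {X | X ∈ QV S ∧ Y ⊆ X}

open Encodable Denumerable Nat.Partrec.Code

theorem rePred_iff_exists_primrecRel {α : Type*} [Primcodable α] {p : α → Prop} :
    REPred p ↔ ∃ q : α → ℕ → Prop, PrimrecRel q ∧ ∀ a, p a ↔ ∃ n, q a n := by
  constructor
  · intro hp
    obtain ⟨c, hc⟩ := exists_code.1 hp
    refine ⟨fun a k => (evaln k c (encode a)).isSome, ?_, fun a => ?_⟩
    · exact Primrec.eq.comp (Primrec.option_isSome.comp (primrec_evaln.comp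
        ((Primrec.snd.pair (Primrec.const c)).pair (Primrec.encode.comp Primrec.fst))))
        (Primrec.const true)
    · have hdom : p a ↔ (eval c (encode a)).Dom := by simp [hc, encodek, Part.assert]
      simp only [hdom, Part.dom_iff_mem, evaln_complete, Option.isSome_iff_exists]
      exact exists_comm
  · rintro ⟨q, hq, hpq⟩
    classical
    refine (Partrec.rfind (hq.decide.to_comp.partrec₂)).dom_re.of_eq fun a => ?_
    simp [Nat.rfind_dom, hpq]

theorem Denumerable.raise'_eq_foldl (l : List ℕ) (acc : List ℕ) (n : ℕ) :
    acc ++ raise' l n =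
      (l.foldl (fun s m => (s.1 ++ [m + s.2], m + s.2 + 1)) (acc, n)).1 := by
  induction l generalizing acc n with
  | nil => simp [raise']
  | cons m l ih => simp [raise', ← ih]

theorem Primrec.raise' : Primrec₂ raise' := by
  have step : Primrec₂ fun (_ : List ℕ × ℕ) (s : (List ℕ × ℕ) × ℕ) =>
      (s.1.1 ++ [s.2 + s.1.2], s.2 + s.1.2 + 1) :=
    ((Primrec.list_concat.comp (Primrec.fst.comp (Primrec.fst.comp Primrec.snd))
      (Primrec.nat_add.comp (Primrec.snd.comp Primrec.snd)
        (Primrec.snd.comp (Primrec.fst.comp Primrec.snd)))).pair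
    (Primrec.succ.comp (Primrec.nat_add.comp (Primrec.snd.comp Primrec.snd)
      (Primrec.snd.comp (Primrec.fst.comp Primrec.snd))))).to₂
  exact (Primrec.fst.comp (Primrec.list_foldl Primrec.fst
    ((Primrec.const ([] : List ℕ)).pair Primrec.snd) step)).of_eq
      fun p => by rw [← raise'_eq_foldl, List.nil_append]

/-- The `Primcodable` structure of `Finset ℕ` comes from its `Denumerable` instance (not from
`Finset.encodable`), whose code of `s` decodes to the gap sequence of the sorted elements of `s`. -/
theorem Denumerable.mem_ofNat_finset_iff_s19 (n x : ℕ) :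
    x ∈ ofNat (Finset ℕ) n ↔ x ∈ raise' (ofNat (List ℕ) n) 0 := by
  change x ∈ Finset.map (eqv ℕ).symm.toEmbedding (raise'Finset _ 0) ↔ _
  simp only [eqv, Equiv.symm_mk, raise'Finset, Finset.mem_map_equiv, Equiv.coe_fn_mk,
    Encodable.encode_nat]
  exact Iff.rfl

theorem Primrec.list_mem {α : Type*} [Primcodable α] :
    PrimrecRel (fun (a : α) (l : List α) => a ∈ l) :=
  (PrimrecRel.exists_mem_list Primrec.eq).swap.of_eq fun a l => by simp

theorem Primrec.finset_mem_nat : PrimrecRel (fun (x : ℕ) (s : Finset ℕ) => x ∈ s) :=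
  (Primrec.list_mem.comp₂ Primrec₂.left (Primrec.raise'.comp₂
    ((Primrec.ofNat (List ℕ)).comp (Primrec.encode.comp Primrec.snd)).to₂
      (Primrec₂.const 0))).of_eq
    fun x s => by simp only [← mem_ofNat_finset_iff_s19, ofNat_encode]

namespace Horn

inductive Derivable (S : Set (List ℕ)) (Y : Set ℕ) : ℕ → Prop
  | base {a : ℕ} : a ∈ Y → Derivable S Y a
  | step {a : ℕ} {t : List ℕ} :
      a :: t ∈ S → (∀ m ∈ t, Derivable S Y m) → Derivable S Y a

variable {S : Set (List ℕ)} {Y : Set ℕ} {q : List ℕ → ℕ → Prop}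

theorem mem_QVclosure_iff_derivable {a : ℕ} :
    a ∈ QVclosure S Y ↔ Derivable S Y a := by
  refine ⟨fun h => h {x | Derivable S Y x} ⟨fun _ _ => Derivable.step, fun _ => Derivable.base⟩,
    fun h X hX => ?_⟩
  induction h with
  | base hy => exact hX.2 hy
  | step ht _ ih => exact hX.1 _ _ ht ih

/-- Steps are listed newest first: a step `(a, t, k)` either takes `a ∈ Y` as an axiom or applies
the rule `a :: t`, certified by the witness `k`, to conclusions of earlier steps. -/
def IsProof (q : List ℕ → ℕ → Prop) (Y : Set ℕ) : List (ℕ × List ℕ × ℕ) → Prop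
  | [] => True
  | (a, t, k) :: c =>
    IsProof q Y c ∧ (a ∈ Y ∨ q (a :: t) k ∧ ∀ m ∈ t, m ∈ c.map Prod.fst)

theorem IsProof.append {c₁ c₂ : List (ℕ × List ℕ × ℕ)} (h₁ : IsProof q Y c₁)
    (h₂ : IsProof q Y c₂) : IsProof q Y (c₁ ++ c₂) := by
  induction c₁ with
  | nil => exact h₂
  | cons e c ih =>
    obtain ⟨a, t, k⟩ := e
    refine ⟨ih h₁.1, h₁.2.imp_right fun ⟨hq, ht⟩ => ⟨hq, fun m hm => ?_⟩⟩
    exact List.map_append ▸ List.mem_append_left _ (ht m hm)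

theorem IsProof.derivable (hq : ∀ l k, q l k → l ∈ S) {c : List (ℕ × List ℕ × ℕ)}
    (hc : IsProof q Y c) : ∀ a ∈ c.map Prod.fst, Derivable S Y a := by
  induction c with
  | nil => simp
  | cons e c ih =>
    obtain ⟨a, t, k⟩ := e
    have hprev := ih hc.1
    have ha : Derivable S Y a := hc.2.elim .base fun ⟨hk, ht⟩ =>
      .step (hq _ _ hk) fun m hm => hprev m (ht m hm)
    simpa [ha] using hprev

theorem exists_isProof_of_forall {t : List ℕ}
    (ht : ∀ m ∈ t, ∃ c, IsProof q Y c ∧ m ∈ c.map Prod.fst) :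
    ∃ c, IsProof q Y c ∧ ∀ m ∈ t, m ∈ c.map Prod.fst := by
  induction t with
  | nil => exact ⟨[], trivial, by simp⟩
  | cons m t ih =>
    obtain ⟨c₁, hc₁, hm⟩ := ht m List.mem_cons_self
    obtain ⟨c₂, hc₂, hms⟩ := ih fun m' hm' => ht m' (List.mem_cons_of_mem _ hm')
    exact ⟨c₁ ++ c₂, hc₁.append hc₂, by simp_all⟩

theorem Derivable.exists_isProof (hq : ∀ l ∈ S, ∃ k, q l k) {a : ℕ}
    (h : Derivable S Y a) : ∃ c, IsProof q Y c ∧ a ∈ c.map Prod.fst := by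
  induction h with
  | @base a ha => exact ⟨[(a, [], 0)], ⟨trivial, .inl ha⟩, by simp⟩
  | @step a t hat _ ih =>
    obtain ⟨k, hk⟩ := hq _ hat
    obtain ⟨c, hc, ht⟩ := exists_isProof_of_forall ih
    exact ⟨(a, t, k) :: c, ⟨hc, .inr ⟨hk, ht⟩⟩, by simp⟩

theorem mem_QVclosure_iff_exists_isProof (hq : ∀ l, l ∈ S ↔ ∃ k, q l k) {a : ℕ} :
    a ∈ QVclosure S Y ↔ ∃ c, IsProof q Y c ∧ a ∈ c.map Prod.fst := by
  rw [mem_QVclosure_iff_derivable]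
  exact ⟨Derivable.exists_isProof fun l => (hq l).1,
    fun ⟨c, hc, ha⟩ => hc.derivable (fun l k hk => (hq l).2 ⟨k, hk⟩) a ha⟩

open Primrec in
theorem primrecRel_isProof {α : Type*} [Primcodable α] {Y : α → Set ℕ}
    (hq : PrimrecRel q) (hY : PrimrecRel fun (x : ℕ) (a : α) => x ∈ Y a) :
    PrimrecRel fun (a : α) (c : List (ℕ × List ℕ × ℕ)) => IsProof q (Y a) c := by
  classical
  let E := ℕ × List ℕ × ℕ
  have hstep : PrimrecPred fun p : α × E × List E =>
      p.2.1.1 ∈ Y p.1 ∨ q (p.2.1.1 :: p.2.1.2.1) p.2.1.2.2 ∧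
        ∀ m ∈ p.2.1.2.1, m ∈ p.2.2.map Prod.fst := by
    have hconcl : Primrec fun p : α × E × List E => p.2.1.1 := fst.comp (fst.comp snd)
    have hprem : Primrec fun p : α × E × List E => p.2.1.2.1 :=
      fst.comp (snd.comp (fst.comp snd))
    have hconcls : Primrec fun p : α × E × List E => p.2.2.map Prod.fst :=
      list_map (snd.comp snd) (fst.comp snd).to₂
    refine (hY.comp hconcl fst).or ((hq.comp (list_cons.comp hconcl hprem)
      (snd.comp (snd.comp (fst.comp snd)))).and ?_)
    exact (PrimrecRel.forall_mem_list (list_mem.comp₂ Primrec₂.left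
      (hconcls.comp snd).to₂)).comp hprem Primrec.id
  have hrec := list_rec snd (const true) (Primrec.and.comp (snd.comp (snd.comp snd))
    (hstep.decide.comp ((fst.comp fst).pair ((fst.comp snd).pair (fst.comp (snd.comp snd)))))).to₂
  refine (Primrec.eq.comp hrec (const true)).of_eq fun ⟨a, c⟩ => ?_
  induction c with
  | nil => simp [IsProof]
  | cons e c ih =>
    obtain ⟨b, t, k⟩ := e
    simp only at ih
    simp [IsProof, ← ih]

end Horn

open Primrec Horn in
theorem consequences_re_general (S : Set (List ℕ)) (hS : REPred (· ∈ S)) :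
    REPred (fun p : ℕ × Finset ℕ => p.1 ∈ QVclosure S ↑p.2) := by
  obtain ⟨q, hq, hSq⟩ := rePred_iff_exists_primrecRel.1 hS
  have hcheck : PrimrecRel fun (p : ℕ × Finset ℕ) (n : ℕ) =>
      IsProof q ↑p.2 (ofNat _ n) ∧ p.1 ∈ (ofNat (List (ℕ × List ℕ × ℕ)) n).map Prod.fst :=
    ((primrecRel_isProof hq finset_mem_nat).comp (snd.comp fst)
      ((Primrec.ofNat _).comp snd)).and
      (list_mem.comp (fst.comp fst)
        (list_map ((Primrec.ofNat _).comp snd) (fst.comp snd).to₂))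
  refine rePred_iff_exists_primrecRel.2 ⟨_, hcheck, fun ⟨a, F⟩ => ?_⟩
  rw [mem_QVclosure_iff_exists_isProof hSq]
  exact ⟨fun ⟨c, hc⟩ => ⟨encode c, by simpa using hc⟩, fun ⟨n, hn⟩ => ⟨_, hn⟩⟩

/-- The set of Horn implications entailed by an r.e. set `S` is itself
recursively enumerable. -/
theorem consequences_re (S : Set (List ℕ)) (hne : ∀ l ∈ S, l ≠ [])
    (hS : REPred (· ∈ S)) :
    REPred (fun p : ℕ × Finset ℕ => p.1 ∈ QVclosure S ↑p.2) :=
  consequences_re_general S hS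
end
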